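/- arXiv:funct-an/9301005 — 2 statements merged into one kernel-verified Lean document; each statement's English description precedes it below -/
import Mathlib

section
/- Let G, H be groups with commuting actions λ, σ on an abelian group U, and let u : G × H → U satisfy u(x₁x₂,h) = u(x₁,h)·λ_{x₁}(u(x₂,h)) and u(x,h₁h₂) = u(x,h₁)·σ_{h₁}(u(x,h₂)). Define U((x₀,h₀),(x₁,h₁)) = λ_{x₀}(u(x₁,h₀)) on (G×H) × (G×H). Then U satisfies the twisted-action cocycle identity: (λ,σ)_{(x₀,h₀)}(U((x₁,h₁),(x₂,h₂))) · U((x₀,h₀),(x₁x₂,h₁h₂)) = U((x₀x₁,h₀h₁),(x₂,h₂)) · U((x₀,h₀),(x₁,h₁)), where (λ,σ)_{(x,h)} = λ_x ∘ σ_h. -/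
/-- For a bi-cocycle `u : G × H → U` (with commuting actions `λ`, `σ` of `G`, `H`
on the abelian group `U`), the map `U((x₀,h₀),(x₁,h₁)) = λ_{x₀}(u(x₁,h₀))` satisfies
the twisted-action cocycle identity for the product action `(λ,σ)_{(x,h)} = λ_x ∘ σ_h`. -/
theorem stmt2 {G H U : Type*} [Group G] [Group H] [CommGroup U]
    (lam : G →* MulAut U) (sig : H →* MulAut U)
    (hcomm : ∀ (x : G) (h : H) (a : U), lam x (sig h a) = sig h (lam x a))
    (u : G → H → U)
    (hu1 : ∀ (x₁ x₂ : G) (h : H), u (x₁ * x₂) h = u x₁ h * lam x₁ (u x₂ h))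
    (hu2 : ∀ (x : G) (h₁ h₂ : H), u x (h₁ * h₂) = u x h₁ * sig h₁ (u x h₂)) :
    ∀ (x₀ x₁ x₂ : G) (h₀ h₁ h₂ : H),
      lam x₀ (sig h₀ (lam x₁ (u x₂ h₁))) * lam x₀ (u (x₁ * x₂) h₀) =
        lam (x₀ * x₁) (u x₂ (h₀ * h₁)) * lam x₀ (u x₁ h₀) := by
  intro x₀ x₁ x₂ h₀ h₁ _
  calc lam x₀ (sig h₀ (lam x₁ (u x₂ h₁))) * lam x₀ (u (x₁ * x₂) h₀)
      = lam x₀ (lam x₁ (sig h₀ (u x₂ h₁))) * (lam x₀ (u x₁ h₀) * lam x₀ (lam x₁ (u x₂ h₀))) := by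
        rw [← hcomm x₁ h₀, hu1, map_mul]
    _ = lam x₀ (lam x₁ (u x₂ h₀ * sig h₀ (u x₂ h₁))) * lam x₀ (u x₁ h₀) := by
        rw [map_mul (lam x₁), map_mul (lam x₀)]
        simp only [mul_comm, mul_left_comm]
    _ = lam (x₀ * x₁) (u x₂ (h₀ * h₁)) * lam x₀ (u x₁ h₀) := by
        rw [hu2, map_mul lam, MulAut.mul_apply]
end

section
/- In the Heisenberg group H_c ≅ ℤ² ⋊_{α_c} ℤ with α_c(q)(m,p) = (m, p - cmq), the commutator subgroup [H_c, H_c] equals {(0, p, 0) : p ∈ cℤ} (identifying elements as triples (m,p,q)), and the abelianization H_c/[H_c,H_c] is isomorphic to ℤ² ⊕ ℤ/cℤ. -/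
/-- The automorphism `α_c(q)(m,p) = (m, p - c·m·q)` of `ℤ²`. -/
def alphaC (c q : ℤ) : ℤ × ℤ ≃+ ℤ × ℤ where
  toFun v := (v.1, v.2 - c * v.1 * q)
  invFun v := (v.1, v.2 + c * v.1 * q)
  left_inv v := by simp
  right_inv v := by simp
  map_add' v w := by simp [Prod.ext_iff]; ring

/-- `q ↦ α_c(q)` as a homomorphism into the automorphisms of `Multiplicative ℤ²`. -/
def phiC (c : ℤ) : Multiplicative ℤ →* MulAut (Multiplicative (ℤ × ℤ)) where
  toFun q := AddEquiv.toMultiplicative (alphaC c q.toAdd)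
  map_one' := by
    ext v
    · simp [alphaC, AddEquiv.toMultiplicative]
    · show v.toAdd.2 - c * v.toAdd.1 * (Multiplicative.toAdd (1 : Multiplicative ℤ)) = v.toAdd.2
      simp
  map_mul' q q' := by
    ext v
    · simp [alphaC, AddEquiv.toMultiplicative]
    · show v.toAdd.2 - c * v.toAdd.1 * (Multiplicative.toAdd (q * q')) = (v.toAdd.2 - c * v.toAdd.1 * q'.toAdd) - c * v.toAdd.1 * q.toAdd
      simp only [toAdd_mul]
      ring

/-- The discrete Heisenberg group `H_c = ℤ² ⋊_{α_c} ℤ` (with elements written as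
triples `(m,p,q)`). -/
abbrev HeisC (c : ℤ) := Multiplicative (ℤ × ℤ) ⋊[phiC c] Multiplicative ℤ

/-!
The map `(m, p, q) ↦ (m, q, p mod c)` is a homomorphism from `H_c` onto the abelian group
`ℤ² × ℤ/cℤ`, because the twist `-c·m'·q` in the middle coordinate vanishes modulo `c`; hence its
kernel `{(0, p, 0) : c ∣ p}` contains the commutator subgroup. Conversely `(0, c·k, 0)` is the
commutator of `(0, 0, 1)` and `(-k, 0, 0)`, so the kernel is exactly the commutator subgroup, and
the first isomorphism theorem identifies the abelianization.
-/

namespace HeisC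

open scoped commutatorElement

@[simp]
lemma toAdd_phiC_apply (c : ℤ) (q : Multiplicative ℤ) (v : Multiplicative (ℤ × ℤ)) :
    Multiplicative.toAdd (phiC c q v) = (v.toAdd.1, v.toAdd.2 - c * v.toAdd.1 * q.toAdd) :=
  rfl

lemma ext_toAdd {c : ℤ} {g h : HeisC c} (hleft : g.left.toAdd = h.left.toAdd)
    (hright : g.right = h.right) : g = h :=
  SemidirectProduct.ext (Multiplicative.toAdd.injective hleft) hright

lemma commutatorElement_eq (c k : ℤ) :
    ⁅(⟨1, Multiplicative.ofAdd 1⟩ : HeisC c), (⟨Multiplicative.ofAdd (-k, 0), 1⟩ : HeisC c)⁆ =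
      ⟨Multiplicative.ofAdd (0, c * k), 1⟩ := by
  refine ext_toAdd ?_ ?_ <;>
    simp [commutatorElement_def]

def toAbelian (c : ℕ) : HeisC c →* Multiplicative (ℤ × ℤ × ZMod c) where
  toFun g := Multiplicative.ofAdd (g.left.toAdd.1, g.right.toAdd, (g.left.toAdd.2 : ZMod c))
  map_one' := by simp
  map_mul' g h := by
    rw [← ofAdd_add, Equiv.apply_eq_iff_eq]
    simp

lemma mem_ker_toAbelian {c : ℕ} (g : HeisC c) :
    g ∈ (toAbelian c).ker ↔
      g.right = 1 ∧ g.left.toAdd.1 = 0 ∧ (c : ℤ) ∣ g.left.toAdd.2 := by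
  simp [toAbelian, Prod.ext_iff, ZMod.intCast_zmod_eq_zero_iff_dvd, and_left_comm]

lemma toAbelian_surjective (c : ℕ) : Function.Surjective (toAbelian c) := by
  intro x
  obtain ⟨p, hp⟩ := ZMod.intCast_surjective x.toAdd.2.2
  exact ⟨⟨Multiplicative.ofAdd (x.toAdd.1, p), Multiplicative.ofAdd x.toAdd.2.1⟩, by
    simp [toAbelian, hp]⟩

lemma ker_toAbelian_eq_commutator (c : ℕ) : (toAbelian c).ker = commutator (HeisC c) := by
  refine le_antisymm (fun g hg => ?_) (Abelianization.commutator_subset_ker _)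
  obtain ⟨hright, hm, k, hk⟩ := (mem_ker_toAbelian g).mp hg
  have hg : g =
      ⁅(⟨1, Multiplicative.ofAdd 1⟩ : HeisC c), (⟨Multiplicative.ofAdd (-k, 0), 1⟩ : HeisC c)⁆ := by
    rw [commutatorElement_eq]
    exact ext_toAdd (by simp [Prod.ext_iff, hm, hk]) hright
  rw [hg]
  exact Subgroup.commutator_mem_commutator (Subgroup.mem_top _) (Subgroup.mem_top _)

end HeisC

theorem stmt15_general (c : ℕ) :
    (∀ g : HeisC c, g ∈ commutator (HeisC c) ↔
        g.right = 1 ∧ g.left.toAdd.1 = 0 ∧ (c : ℤ) ∣ g.left.toAdd.2) ∧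
      Nonempty (Abelianization (HeisC c) ≃* Multiplicative (ℤ × ℤ × ZMod c)) := by
  refine ⟨fun g => ?_, ⟨?_⟩⟩
  · rw [← HeisC.ker_toAbelian_eq_commutator, HeisC.mem_ker_toAbelian]
  · exact (QuotientGroup.quotientMulEquivOfEq (HeisC.ker_toAbelian_eq_commutator c).symm).trans
      (QuotientGroup.quotientKerEquivOfSurjective _ (HeisC.toAbelian_surjective c))

/-- In `H_c ≅ ℤ² ⋊_{α_c} ℤ`, the commutator subgroup is `{(0, p, 0) : p ∈ cℤ}`,
and the abelianization `H_c/[H_c,H_c]` is isomorphic to `ℤ² ⊕ ℤ/cℤ`. -/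
theorem stmt15 (c : ℕ) (hc : 0 < c) :
    (∀ g : HeisC c, g ∈ commutator (HeisC c) ↔
        g.right = 1 ∧ g.left.toAdd.1 = 0 ∧ (c : ℤ) ∣ g.left.toAdd.2) ∧
      Nonempty (Abelianization (HeisC c) ≃* Multiplicative (ℤ × ℤ × ZMod c)) :=
  stmt15_general c
end
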